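/- Let A, N_1,…,N_m ∈ ℝ^{n×n}, X₀ ∈ ℝ^{n×q}, let Ã, Ñ_1,…,Ñ_m ∈ ℝ^{ñ×ñ}, X̃₀ ∈ ℝ^{ñ×q}, V ∈ ℝ^{n×ñ}, γ > 0, and let u be a continuous control. Let Φ and Φ̃ be the fundamental solutions of the bilinear systems with matrices (A, N_k) and (Ã, Ñ_k) and the same control u. Then for all t ≥ 0, ‖Φ(t) X₀ − V Φ̃(t) X̃₀‖_F² ≤ tr([I −V] Z^e_γ(t) [I −V]^⊤) · exp{∫₀^t ‖γ u⁰(s)‖₂² ds}, where Z^e_γ solves Ż^e = A^e Z^e + Z^e (A^e)^⊤ + γ^{-2} Σ_k N_k^e Z^e (N_k^e)^⊤ with A^e = diag(A, Ã), N_k^e = diag(N_k, Ñ_k), Z^e(0) = [X₀; X̃₀][X₀; X̃₀]^⊤, and u⁰ is taken with respect to the augmented matrices N_k^e. -/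

import Mathlib

open MeasureTheory Matrix
open scoped Classical

attribute [local instance] Matrix.normedAddCommGroup Matrix.normedSpace

open Set Filter Topology

/-!
Stack the two systems into `Y = [Φ X₀; Φ̃ X̃₀]`, so that `Ẏ = B Y` with `B = A^e + Σ uₖ N^e_k`,
and let `Zₛ` be the symmetric part of `Z^e`, which solves the same Lyapunov equation. With
`f(t) = ∫₀ᵗ ‖γ u⁰‖²` and `Mₖ = γ⁻¹ N^e_k − γ u⁰ₖ I`, completing the square shows that
`D = e^f Zₛ − Y Yᵀ` satisfies `Ḋ = B D + D Bᵀ + e^f Σₖ Mₖ Zₛ Mₖᵀ`.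
Solutions of `Ẋ = B X + X Bᵀ + Σₖ Cₖ X Cₖᵀ + F` with `F ⪰ 0` and `X(0) ⪰ 0` stay positive
semidefinite: at the first time `X + ε e^{(c+1)t} I` becomes singular, the quadratic form along
a kernel vector would have to be increasing, although it has just dropped to zero. This gives
`Zₛ ⪰ 0`, then `D ⪰ 0`, and conjugating `D` with `[I −V]` and taking traces gives the estimate.
-/

section MatrixCalculus

variable {ι κ ρ : Type*}

theorem hasDerivAt_matrix [Fintype κ] {f : ℝ → Matrix ι κ ℝ} {f' : Matrix ι κ ℝ} {t : ℝ} :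
    HasDerivAt f f' t ↔ ∀ i j, HasDerivAt (fun s => f s i j) (f' i j) t :=
  hasDerivAt_pi.trans (forall_congr' fun _ => hasDerivAt_pi)

theorem HasDerivAt.matrix_mul [Fintype κ] [Fintype ρ] {f : ℝ → Matrix ι κ ℝ}
    {g : ℝ → Matrix κ ρ ℝ} {f' : Matrix ι κ ℝ} {g' : Matrix κ ρ ℝ} {t : ℝ}
    (hf : HasDerivAt f f' t) (hg : HasDerivAt g g' t) :
    HasDerivAt (fun s => f s * g s) (f' * g t + f t * g') t := by
  rw [hasDerivAt_matrix] at *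
  intro i j
  simpa only [mul_apply, Matrix.add_apply, ← Finset.sum_add_distrib] using
    HasDerivAt.fun_sum fun k _ => (hf i k).fun_mul (hg k j)

theorem HasDerivAt.matrix_transpose [Fintype ι] [Fintype κ] {f : ℝ → Matrix ι κ ℝ}
    {f' : Matrix ι κ ℝ} {t : ℝ} (hf : HasDerivAt f f' t) : HasDerivAt (fun s => (f s)ᵀ) f'ᵀ t :=
  hasDerivAt_matrix.2 fun i j => hasDerivAt_matrix.1 hf j i

theorem HasDerivAt.matrix_fromRows [Fintype ρ] {f : ℝ → Matrix ι ρ ℝ} {g : ℝ → Matrix κ ρ ℝ}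
    {f' : Matrix ι ρ ℝ} {g' : Matrix κ ρ ℝ} {t : ℝ}
    (hf : HasDerivAt f f' t) (hg : HasDerivAt g g' t) :
    HasDerivAt (fun s => fromRows (f s) (g s)) (fromRows f' g') t := by
  rw [hasDerivAt_matrix] at *
  rintro (i | i) j
  exacts [hf i j, hg i j]

theorem HasDerivAt.dotProduct_mulVec [Fintype ι] {f : ℝ → Matrix ι ι ℝ} {f' : Matrix ι ι ℝ}
    {t : ℝ} (hf : HasDerivAt f f' t) (x : ι → ℝ) :
    HasDerivAt (fun s => x ⬝ᵥ (f s *ᵥ x)) (x ⬝ᵥ (f' *ᵥ x)) t := by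
  simp only [dotProduct, mulVec, Finset.mul_sum]
  exact HasDerivAt.fun_sum fun i _ => HasDerivAt.fun_sum fun j _ =>
    ((hasDerivAt_matrix.1 hf i j).mul_const (x j)).const_mul (x i)

end MatrixCalculus

theorem HasDerivAt.nonpos_of_forall_Ioo_le {g : ℝ → ℝ} {g' a τ : ℝ} (hg : HasDerivAt g g' τ)
    (ha : a < τ) (hle : ∀ s ∈ Ioo a τ, g τ ≤ g s) : g' ≤ 0 := by
  have hslope : Tendsto (slope g τ) (𝓝[<] τ) (𝓝 g') :=
    (hasDerivAt_iff_tendsto_slope.mp hg).mono_left (nhdsLT_le_nhdsNE τ)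
  refine le_of_tendsto hslope ?_
  filter_upwards [Ioo_mem_nhdsLT ha] with s hs
  rw [slope_def_field]
  exact div_nonpos_of_nonneg_of_nonpos (sub_nonneg.2 (hle s hs)) (by linarith [hs.2])

namespace Matrix

variable {ι : Type*}

theorem isHermitian_half_smul_add_transpose (Z : Matrix ι ι ℝ) :
    ((2 : ℝ)⁻¹ • (Z + Zᵀ)).IsHermitian := by
  simp [IsHermitian, conjTranspose_eq_transpose_of_trivial, add_comm]

theorem IsHermitian.half_smul_add_transpose_eq {Z : Matrix ι ι ℝ} (hZ : Z.IsHermitian) :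
    (2 : ℝ)⁻¹ • (Z + Zᵀ) = Z := by
  rw [← conjTranspose_eq_transpose_of_trivial, hZ.eq]
  module

variable [Fintype ι]

theorem dotProduct_mulVec_smul_self (M : Matrix ι ι ℝ) (c : ℝ) (x : ι → ℝ) :
    (c • x) ⬝ᵥ (M *ᵥ (c • x)) = c ^ 2 * (x ⬝ᵥ (M *ᵥ x)) := by
  simp only [mulVec_smul, dotProduct_smul, smul_dotProduct, smul_eq_mul]
  ring

theorem dotProduct_mulVec_nonneg_of_sphere {M : Matrix ι ι ℝ}
    (h : ∀ z ∈ Metric.sphere (0 : ι → ℝ) 1, 0 ≤ z ⬝ᵥ (M *ᵥ z)) (x : ι → ℝ) :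
    0 ≤ x ⬝ᵥ (M *ᵥ x) := by
  rcases eq_or_ne x 0 with rfl | hx
  · simp
  have hnorm : ‖x‖ ≠ 0 := norm_ne_zero_iff.2 hx
  have hz : ‖x‖⁻¹ • x ∈ Metric.sphere (0 : ι → ℝ) 1 := by
    simp [norm_smul, hnorm]
  have := h _ hz
  rw [dotProduct_mulVec_smul_self] at this
  exact nonneg_of_mul_nonneg_right this (by positivity)

theorem dotProduct_self_pos_of_mem_sphere {z : ι → ℝ} (hz : z ∈ Metric.sphere (0 : ι → ℝ) 1) :
    0 < z ⬝ᵥ z :=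
  dotProduct_self_star_pos_iff.2 (ne_zero_of_mem_unit_sphere ⟨z, hz⟩)

theorem abs_dotProduct_mulVec_le (M : Matrix ι ι ℝ) (x : ι → ℝ) :
    |x ⬝ᵥ (M *ᵥ x)| ≤ (∑ i, ∑ j, |M i j|) * (x ⬝ᵥ x) := by
  have hsq : ∀ i, x i * x i ≤ x ⬝ᵥ x := fun i =>
    Finset.single_le_sum (f := fun i => x i * x i) (fun i _ => mul_self_nonneg _)
      (Finset.mem_univ i)
  have hterm : ∀ i j, |x i * (M i j * x j)| ≤ |M i j| * (x ⬝ᵥ x) := fun i j => by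
    rw [abs_mul, abs_mul, mul_left_comm]
    refine mul_le_mul_of_nonneg_left ?_ (abs_nonneg _)
    nlinarith [hsq i, hsq j, abs_mul_abs_self (x i), abs_mul_abs_self (x j),
      sq_nonneg (|x i| - |x j|)]
  calc |x ⬝ᵥ (M *ᵥ x)| = |∑ i, ∑ j, x i * (M i j * x j)| := by
        simp only [dotProduct, mulVec, Finset.mul_sum]
    _ ≤ ∑ i, ∑ j, |x i * (M i j * x j)| :=
        (Finset.abs_sum_le_sum_abs _ _).trans
          (Finset.sum_le_sum fun i _ => Finset.abs_sum_le_sum_abs _ _)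
    _ ≤ ∑ i, ∑ j, |M i j| * (x ⬝ᵥ x) :=
        Finset.sum_le_sum fun i _ => Finset.sum_le_sum fun j _ => hterm i j
    _ = (∑ i, ∑ j, |M i j|) * (x ⬝ᵥ x) := by simp only [Finset.sum_mul]

theorem exists_abs_dotProduct_mulVec_le {s : Set ℝ} {M : ℝ → Matrix ι ι ℝ} (hs : IsCompact s)
    (hM : ContinuousOn M s) : ∃ C, ∀ t ∈ s, ∀ x, |x ⬝ᵥ (M t *ᵥ x)| ≤ C * (x ⬝ᵥ x) := by
  obtain ⟨C, hC⟩ := hs.exists_bound_of_continuousOn (f := fun t => ∑ i, ∑ j, |M t i j|)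
    (continuousOn_finsetSum _ fun i _ => continuousOn_finsetSum _ fun j _ =>
      ((continuous_apply_apply i j).comp_continuousOn hM).abs)
  refine ⟨C, fun t ht x => (abs_dotProduct_mulVec_le _ x).trans ?_⟩
  exact mul_le_mul_of_nonneg_right ((le_abs_self _).trans (hC t ht)) (dotProduct_star_self_nonneg x)

theorem dotProduct_mul_mul_transpose_mulVec {κ : Type*} [Fintype κ] (P : Matrix ι κ ℝ)
    (Q : Matrix κ κ ℝ) (x : ι → ℝ) :
    x ⬝ᵥ ((P * Q * Pᵀ) *ᵥ x) = (Pᵀ *ᵥ x) ⬝ᵥ (Q *ᵥ (Pᵀ *ᵥ x)) := by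
  rw [← mulVec_mulVec, ← mulVec_mulVec, dotProduct_mulVec, mulVec_transpose]

theorem isCompact_setOf_dotProduct_mulVec_nonpos {E : ℝ → Matrix ι ι ℝ} {a b : ℝ}
    (hE : ContinuousOn E (Icc a b)) :
    IsCompact {p : ℝ × (ι → ℝ) |
      p ∈ Icc a b ×ˢ Metric.sphere 0 1 ∧ p.2 ⬝ᵥ (E p.1 *ᵥ p.2) ≤ 0} := by
  have hq : ContinuousOn (fun p : ℝ × (ι → ℝ) => p.2 ⬝ᵥ (E p.1 *ᵥ p.2))
      (Icc a b ×ˢ Metric.sphere 0 1) :=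
    (continuous_snd.dotProduct (continuous_fst.matrix_mulVec continuous_snd)).comp_continuousOn
      ((hE.comp continuousOn_fst fun p hp => hp.1).prodMk continuousOn_snd)
  exact (isCompact_Icc.prod (isCompact_sphere 0 1)).of_isClosed_subset
    (hq.preimage_isClosed_of_isClosed (isClosed_Icc.prod Metric.isClosed_sphere) isClosed_Iic)
    fun p hp => hp.1

theorem posSemidef_of_forall_Ioo {E : ℝ → Matrix ι ι ℝ} {a τ : ℝ} (haτ : a < τ)
    (hE : ContinuousAt E τ) (hherm : (E τ).IsHermitian)
    (h : ∀ s ∈ Ioo a τ, ∀ x, 0 ≤ x ⬝ᵥ (E s *ᵥ x)) : (E τ).PosSemidef := by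
  refine .of_dotProduct_mulVec_nonneg hherm fun x => ?_
  have hx : ContinuousAt (fun s => x ⬝ᵥ (E s *ᵥ x)) τ :=
    (continuous_const.dotProduct (continuous_id.matrix_mulVec continuous_const)).continuousAt.comp
      hE
  refine star_trivial x ▸ ge_of_tendsto (x := 𝓝[<] τ) (hx.tendsto.mono_left nhdsWithin_le_nhds) ?_
  filter_upwards [Ioo_mem_nhdsLT haτ] with s hs
  exact h s hs x

variable [DecidableEq ι]

theorem dotProduct_mulVec_pos_of_hasDerivAt {X X' : ℝ → Matrix ι ι ℝ} {a b c ε : ℝ}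
    (hε : 0 < ε) (hherm : ∀ t ∈ Icc a b, (X t).IsHermitian)
    (hX : ∀ t ∈ Icc a b, HasDerivAt X (X' t) t) (ha : (X a).PosSemidef)
    (hker : ∀ t ∈ Icc a b, ∀ ε > 0, (X t + ε • 1).PosSemidef → ∀ x, X t *ᵥ x = -ε • x →
      -(c * ε * (x ⬝ᵥ x)) ≤ x ⬝ᵥ (X' t *ᵥ x))
    {t : ℝ} (ht : t ∈ Icc a b) {z : ι → ℝ} (hz : z ∈ Metric.sphere (0 : ι → ℝ) 1) :
    0 < z ⬝ᵥ ((X t + (ε * Real.exp ((c + 1) * t)) • 1) *ᵥ z) := by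
  set E : ℝ → Matrix ι ι ℝ := fun s => X s + (ε * Real.exp ((c + 1) * s)) • 1
  have hE : ∀ s ∈ Icc a b, HasDerivAt E
      (X' s + (ε * (Real.exp ((c + 1) * s) * (c + 1))) • 1) s := fun s hs =>
    (hX s hs).add <| (((hasDerivAt_id s).const_mul (c + 1)).exp.const_mul ε).smul_const 1
      |>.congr_deriv (by simp)
  by_contra! hneg
  -- `τ` is the first time at which `E` fails to be positive definite
  obtain ⟨⟨τ, z⟩, ⟨⟨hτ, hz⟩, hτz⟩, hmin⟩ :=
    (isCompact_setOf_dotProduct_mulVec_nonpos fun s hs => (hE s hs).continuousAt.continuousWithinAt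
      ).exists_isMinOn (f := Prod.fst) ⟨(t, z), ⟨ht, hz⟩, hneg⟩ continuous_fst.continuousOn
  have hbefore : ∀ s ∈ Ico a τ, ∀ x, 0 ≤ x ⬝ᵥ (E s *ᵥ x) := by
    intro s hs
    refine dotProduct_mulVec_nonneg_of_sphere fun y hy => ?_
    by_contra! hy'
    have hτs : τ ≤ s := hmin (a := (s, y)) ⟨⟨⟨hs.1, hs.2.le.trans hτ.2⟩, hy⟩, hy'.le⟩
    exact not_le.2 hs.2 hτs
  have haτ : a < τ := by
    refine hτ.1.lt_of_ne fun haτ => (not_lt.2 hτz) ?_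
    subst haτ
    have hzz := dotProduct_self_pos_of_mem_sphere hz
    have hXz := ha.dotProduct_mulVec_nonneg z
    rw [star_trivial] at hXz
    simp only [E, add_mulVec, smul_mulVec, one_mulVec, dotProduct_add, dotProduct_smul,
      smul_eq_mul]
    positivity
  have hEτ : (E τ).PosSemidef :=
    posSemidef_of_forall_Ioo haτ (hE τ hτ).continuousAt
      ((hherm τ hτ).add (isHermitian_one.smul (IsSelfAdjoint.all _)))
      fun s hs => hbefore s ⟨hs.1.le, hs.2⟩
  have hτz0 : z ⬝ᵥ (E τ *ᵥ z) = 0 :=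
    le_antisymm hτz (by simpa using hEτ.dotProduct_mulVec_nonneg z)
  have hEz : E τ *ᵥ z = 0 := (hEτ.dotProduct_mulVec_zero_iff z).1 (by simpa using hτz0)
  have hXz : X τ *ᵥ z = -(ε * Real.exp ((c + 1) * τ)) • z := by
    simpa [E, add_mulVec, smul_mulVec, add_eq_zero_iff_eq_neg] using hEz
  have hX'z := hker τ hτ _ (by positivity) hEτ z hXz
  have hderiv := (hE τ hτ).dotProduct_mulVec z
  refine (hderiv.nonpos_of_forall_Ioo_le haτ fun s hs => ?_).not_gt ?_
  · rw [hτz0]; exact hbefore s ⟨hs.1.le, hs.2⟩ z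
  · have hzz : 0 < z ⬝ᵥ z := dotProduct_self_pos_of_mem_sphere hz
    simp only [add_mulVec, smul_mulVec, one_mulVec, dotProduct_add, dotProduct_smul, smul_eq_mul]
    nlinarith [mul_pos (mul_pos hε (Real.exp_pos ((c + 1) * τ))) hzz]

theorem posSemidef_of_hasDerivAt {X X' : ℝ → Matrix ι ι ℝ} {a b c : ℝ}
    (hherm : ∀ t ∈ Icc a b, (X t).IsHermitian)
    (hX : ∀ t ∈ Icc a b, HasDerivAt X (X' t) t) (ha : (X a).PosSemidef)
    (hker : ∀ t ∈ Icc a b, ∀ ε > 0, (X t + ε • 1).PosSemidef → ∀ x, X t *ᵥ x = -ε • x →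
      -(c * ε * (x ⬝ᵥ x)) ≤ x ⬝ᵥ (X' t *ᵥ x))
    {t : ℝ} (ht : t ∈ Icc a b) : (X t).PosSemidef := by
  refine .of_dotProduct_mulVec_nonneg (hherm t ht) fun x => ?_
  refine star_trivial x ▸ dotProduct_mulVec_nonneg_of_sphere (fun z hz => ?_) x
  have hK : 0 < Real.exp ((c + 1) * t) * (z ⬝ᵥ z) :=
    mul_pos (Real.exp_pos _) (dotProduct_self_pos_of_mem_sphere hz)
  refine le_of_forall_pos_lt_add fun δ hδ => ?_
  have := dotProduct_mulVec_pos_of_hasDerivAt (div_pos hδ hK) hherm hX ha hker ht hz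
  simp only [add_mulVec, smul_mulVec, one_mulVec, dotProduct_add, dotProduct_smul,
    smul_eq_mul] at this
  rwa [mul_assoc, div_mul_cancel₀ δ hK.ne'] at this

theorem posSemidef_of_hasDerivAt_lyapunov {κ : Type*} [Fintype κ]
    {X B F : ℝ → Matrix ι ι ℝ} {C : κ → ℝ → Matrix ι ι ℝ} {a b : ℝ}
    (hB : ContinuousOn B (Icc a b)) (hC : ∀ k, ContinuousOn (C k) (Icc a b))
    (hF : ∀ t ∈ Icc a b, (F t).PosSemidef) (hherm : ∀ t ∈ Icc a b, (X t).IsHermitian)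
    (hX : ∀ t ∈ Icc a b, HasDerivAt X
      (B t * X t + X t * (B t)ᵀ + ∑ k, C k t * X t * (C k t)ᵀ + F t) t)
    (ha : (X a).PosSemidef) {t : ℝ} (ht : t ∈ Icc a b) : (X t).PosSemidef := by
  obtain ⟨cB, hcB⟩ := exists_abs_dotProduct_mulVec_le isCompact_Icc hB
  obtain ⟨cC, hcC⟩ := exists_abs_dotProduct_mulVec_le (M := fun t => ∑ k, C k t * (C k t)ᵀ)
    isCompact_Icc (continuousOn_finsetSum _ fun k _ =>
      (continuous_id.matrix_mul continuous_id.matrix_transpose).comp_continuousOn (hC k))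
  refine posSemidef_of_hasDerivAt hherm hX ha (c := 2 * cB + cC)
    (fun s hs ε hε hpsd x hx => ?_) ht
  have hXsymm : (X s)ᵀ = X s := by simpa using (hherm s hs).eq
  have hshift : ∀ y, -(ε * (y ⬝ᵥ y)) ≤ y ⬝ᵥ (X s *ᵥ y) := fun y => by
    have := hpsd.dotProduct_mulVec_nonneg y
    simp only [star_trivial, add_mulVec, smul_mulVec, one_mulVec, dotProduct_add,
      dotProduct_smul, smul_eq_mul] at this
    linarith
  have hBX : x ⬝ᵥ ((B s * X s) *ᵥ x) = -ε * (x ⬝ᵥ (B s *ᵥ x)) := by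
    rw [← mulVec_mulVec, hx, mulVec_smul, dotProduct_smul, smul_eq_mul]
  have hXB : x ⬝ᵥ ((X s * (B s)ᵀ) *ᵥ x) = -ε * (x ⬝ᵥ (B s *ᵥ x)) := by
    rw [← mulVec_mulVec, dotProduct_mulVec, ← mulVec_transpose, hXsymm, hx, smul_dotProduct,
      dotProduct_mulVec, vecMul_transpose, dotProduct_comm, smul_eq_mul]
  have hCXC : -(ε * (x ⬝ᵥ ((∑ k, C k s * (C k s)ᵀ) *ᵥ x))) ≤
      x ⬝ᵥ ((∑ k, C k s * X s * (C k s)ᵀ) *ᵥ x) := by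
    simp only [sum_mulVec, dotProduct_sum, Finset.mul_sum, ← Finset.sum_neg_distrib]
    refine Finset.sum_le_sum fun k _ => ?_
    rw [dotProduct_mul_mul_transpose_mulVec, ← mulVec_mulVec, dotProduct_mulVec,
      ← mulVec_transpose]
    exact hshift _
  have hF' := (hF s hs).dotProduct_mulVec_nonneg x
  rw [star_trivial] at hF'
  have hB' := abs_le.1 (hcB s hs x)
  have hC' := abs_le.1 (hcC s hs x)
  rw [add_mulVec, add_mulVec, add_mulVec, dotProduct_add, dotProduct_add, dotProduct_add, hBX,
    hXB]
  nlinarith [mul_le_mul_of_nonneg_left hB'.2 hε.le, mul_le_mul_of_nonneg_left hC'.2 hε.le]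

end Matrix

section BilinearSystem

variable {ι κ ρ : Type*} [Fintype ι]

-- the paper's `u⁰`
noncomputable def effectiveControl (N : κ → Matrix ι ι ℝ) (u : ℝ → κ → ℝ) (t : ℝ) (k : κ) :
    ℝ :=
  if N k = 0 then 0 else u t k

theorem effectiveControl_smul (N : κ → Matrix ι ι ℝ) (u : ℝ → κ → ℝ) (t : ℝ) (k : κ) :
    effectiveControl N u t k • N k = u t k • N k := by
  unfold effectiveControl
  split_ifs with h <;> simp [h]

variable [Fintype κ] [Fintype ρ]

theorem HasDerivAt.bilinear_mul_const {Φ : ℝ → Matrix ι ι ℝ} {A : Matrix ι ι ℝ}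
    {N : κ → Matrix ι ι ℝ} {u : ℝ → κ → ℝ} {t : ℝ}
    (hΦ : HasDerivAt Φ (A * Φ t + ∑ k, u t k • (N k * Φ t)) t) (X₀ : Matrix ι ρ ℝ) :
    HasDerivAt (fun s => Φ s * X₀) ((A + ∑ k, u t k • N k) * (Φ t * X₀)) t :=
  (hΦ.matrix_mul (hasDerivAt_const t X₀)).congr_deriv (by
    simp only [Matrix.mul_zero, add_zero, Matrix.add_mul, Matrix.sum_mul, Matrix.smul_mul,
      Matrix.mul_assoc])

variable [DecidableEq ι]

theorem inv_smul_sub_smul_one_mul_mul_transpose {γ : ℝ} (hγ : γ ≠ 0) (N Z : Matrix ι ι ℝ)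
    (v : ℝ) :
    (γ⁻¹ • N - (γ * v) • 1) * Z * (γ⁻¹ • N - (γ * v) • 1)ᵀ =
      (γ⁻¹ • N) * Z * (γ⁻¹ • N)ᵀ - v • (N * Z + Z * Nᵀ) + (γ * v) ^ 2 • Z := by
  simp only [sub_mul, mul_sub, transpose_sub, transpose_smul, transpose_one, Matrix.smul_mul,
    Matrix.mul_smul, one_mul, mul_one, smul_add, smul_smul, inv_mul_cancel_left₀ hγ,
    mul_comm _ γ⁻¹]
  module

theorem lyapunov_add_sum_sq_smul_eq {γ : ℝ} (hγ : γ ≠ 0) (A Z : Matrix ι ι ℝ)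
    (N : κ → Matrix ι ι ℝ) (u : ℝ → κ → ℝ) (t : ℝ) :
    A * Z + Z * Aᵀ + ∑ k, (γ⁻¹ • N k) * Z * (γ⁻¹ • N k)ᵀ +
        (∑ k, (γ * effectiveControl N u t k) ^ 2) • Z =
      (A + ∑ k, u t k • N k) * Z + Z * (A + ∑ k, u t k • N k)ᵀ +
        ∑ k, (γ⁻¹ • N k - (γ * effectiveControl N u t k) • 1) * Z *
          (γ⁻¹ • N k - (γ * effectiveControl N u t k) • 1)ᵀ := by
  simp only [inv_smul_sub_smul_one_mul_mul_transpose hγ]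
  simp only [← effectiveControl_smul N u t, add_mul, mul_add, transpose_add,
    transpose_sum, Finset.sum_mul, Finset.mul_sum, smul_add, Finset.sum_add_distrib,
    Finset.sum_sub_distrib, Finset.sum_smul, Matrix.smul_mul, Matrix.mul_smul, transpose_smul]
  abel

theorem HasDerivAt.symmPart_of_lyapunov {A : Matrix ι ι ℝ} {N : κ → Matrix ι ι ℝ} {γ t : ℝ}
    {Z : ℝ → Matrix ι ι ℝ}
    (hZ : HasDerivAt Z (A * Z t + Z t * Aᵀ + (γ ^ 2)⁻¹ • ∑ k, N k * Z t * (N k)ᵀ) t) :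
    HasDerivAt (fun s => (2 : ℝ)⁻¹ • (Z s + (Z s)ᵀ))
      (A * ((2 : ℝ)⁻¹ • (Z t + (Z t)ᵀ)) + (2 : ℝ)⁻¹ • (Z t + (Z t)ᵀ) * Aᵀ +
        ∑ k, (γ⁻¹ • N k) * ((2 : ℝ)⁻¹ • (Z t + (Z t)ᵀ)) * (γ⁻¹ • N k)ᵀ) t := by
  refine ((hZ.add hZ.matrix_transpose).const_smul (2 : ℝ)⁻¹).congr_deriv ?_
  simp only [transpose_add, transpose_mul, transpose_smul, transpose_sum, transpose_transpose,
    Matrix.smul_mul, Matrix.mul_smul, mul_add, add_mul, Matrix.mul_assoc, Finset.sum_add_distrib,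
    smul_add, smul_smul, ← Finset.smul_sum]
  module

theorem posSemidef_symmPart_of_lyapunov {A : Matrix ι ι ℝ} {N : κ → Matrix ι ι ℝ} {γ : ℝ}
    {Z : ℝ → Matrix ι ι ℝ} (hZ0 : (Z 0).PosSemidef)
    (hZ : ∀ t, 0 ≤ t → HasDerivAt Z
      (A * Z t + Z t * Aᵀ + (γ ^ 2)⁻¹ • ∑ k, N k * Z t * (N k)ᵀ) t)
    {t : ℝ} (ht : 0 ≤ t) : ((2 : ℝ)⁻¹ • (Z t + (Z t)ᵀ)).PosSemidef := by
  refine posSemidef_of_hasDerivAt_lyapunov (B := fun _ => A) (C := fun k _ => γ⁻¹ • N k)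
    (F := 0) (X := fun s => (2 : ℝ)⁻¹ • (Z s + (Z s)ᵀ)) continuousOn_const
    (fun _ => continuousOn_const) (fun _ _ => .zero)
    (fun s _ => isHermitian_half_smul_add_transpose (Z s)) (fun s hs => ?_)
    (by rwa [hZ0.isHermitian.half_smul_add_transpose_eq]) ⟨ht, le_rfl⟩
  rw [Pi.zero_apply, add_zero]
  exact (hZ s hs.1).symmPart_of_lyapunov

theorem HasDerivAt.exp_smul_sub_mul_transpose {A : Matrix ι ι ℝ} {N : κ → Matrix ι ι ℝ}
    {u : ℝ → κ → ℝ} {γ t : ℝ} (hγ : γ ≠ 0) {f : ℝ → ℝ} {Y : ℝ → Matrix ι ρ ℝ}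
    {S : ℝ → Matrix ι ι ℝ}
    (hf : HasDerivAt f (∑ k, (γ * effectiveControl N u t k) ^ 2) t)
    (hY : HasDerivAt Y ((A + ∑ k, u t k • N k) * Y t) t)
    (hS : HasDerivAt S (A * S t + S t * Aᵀ + ∑ k, (γ⁻¹ • N k) * S t * (γ⁻¹ • N k)ᵀ) t) :
    HasDerivAt (fun s => Real.exp (f s) • S s - Y s * (Y s)ᵀ)
      ((A + ∑ k, u t k • N k) * (Real.exp (f t) • S t - Y t * (Y t)ᵀ) +
        (Real.exp (f t) • S t - Y t * (Y t)ᵀ) * (A + ∑ k, u t k • N k)ᵀ +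
        Real.exp (f t) • ∑ k, (γ⁻¹ • N k - (γ * effectiveControl N u t k) • 1) * S t *
          (γ⁻¹ • N k - (γ * effectiveControl N u t k) • 1)ᵀ) t := by
  refine ((hf.exp.smul hS).sub (hY.matrix_mul hY.matrix_transpose)).congr_deriv ?_
  have key := lyapunov_add_sum_sq_smul_eq hγ A (S t) N u t
  simp only [transpose_mul, mul_sub, sub_mul, Matrix.mul_smul, Matrix.smul_mul,
    Matrix.mul_assoc] at key ⊢
  linear_combination (norm := module) Real.exp (f t) • key

theorem posSemidef_exp_smul_sub_mul_transpose {A : Matrix ι ι ℝ} {N : κ → Matrix ι ι ℝ}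
    {u : ℝ → κ → ℝ} {γ : ℝ} {Y : ℝ → Matrix ι ρ ℝ} {Z : ℝ → Matrix ι ι ℝ}
    (hγ : γ ≠ 0) (hu : Continuous u)
    (hY : ∀ t, 0 ≤ t → HasDerivAt Y ((A + ∑ k, u t k • N k) * Y t) t)
    (hZ0 : Z 0 = Y 0 * (Y 0)ᵀ)
    (hZ : ∀ t, 0 ≤ t → HasDerivAt Z
      (A * Z t + Z t * Aᵀ + (γ ^ 2)⁻¹ • ∑ k, N k * Z t * (N k)ᵀ) t)
    {t : ℝ} (ht : 0 ≤ t) :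
    (Real.exp (∫ s in (0 : ℝ)..t, ∑ k, (γ * effectiveControl N u s k) ^ 2) •
      ((2 : ℝ)⁻¹ • (Z t + (Z t)ᵀ)) - Y t * (Y t)ᵀ).PosSemidef := by
  have hZ0psd : (Z 0).PosSemidef := hZ0 ▸ posSemidef_self_mul_conjTranspose (Y 0)
  set w : ℝ → ℝ := fun s => ∑ k, (γ * effectiveControl N u s k) ^ 2
  set Zs : ℝ → Matrix ι ι ℝ := fun s => (2 : ℝ)⁻¹ • (Z s + (Z s)ᵀ)
  set M : ℝ → κ → Matrix ι ι ℝ := fun s k => γ⁻¹ • N k - (γ * effectiveControl N u s k) • 1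
  have hw : Continuous w := continuous_finsetSum _ fun k _ => by
    by_cases h : N k = 0 <;> simp only [effectiveControl, h, if_true, if_false] <;> fun_prop
  refine posSemidef_of_hasDerivAt_lyapunov (a := 0) (C := fun (_ : Empty) _ => 0)
    (X := fun s => Real.exp (∫ v in (0 : ℝ)..s, w v) • Zs s - Y s * (Y s)ᵀ)
    (F := fun s => Real.exp (∫ v in (0 : ℝ)..s, w v) • ∑ k, M s k * Zs s * (M s k)ᵀ)
    (B := fun s => A + ∑ k, u s k • N k) (by fun_prop) (fun _ => continuousOn_const)
    (fun s hs => ?_) (fun s _ => ?_) (fun s hs => ?_) ?_ ⟨ht, le_rfl⟩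
  · refine (posSemidef_sum _ fun k _ => ?_).smul (Real.exp_pos _).le
    rw [← conjTranspose_eq_transpose_of_trivial]
    exact (posSemidef_symmPart_of_lyapunov hZ0psd hZ hs.1).mul_mul_conjTranspose_same (M s k)
  · refine ((isHermitian_half_smul_add_transpose (Z s)).smul (IsSelfAdjoint.all _)).sub ?_
    simpa using isHermitian_mul_conjTranspose_self (Y s)
  · rw [Fintype.sum_empty (ι := Empty), add_zero]
    exact ((hw.integral_hasStrictDerivAt 0 s).hasDerivAt).exp_smul_sub_mul_transpose hγ
      (hY s hs.1) (hZ s hs.1).symmPart_of_lyapunov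
  · simp only [Zs, hZ0psd.isHermitian.half_smul_add_transpose_eq, intervalIntegral.integral_same,
      Real.exp_zero, one_smul, hZ0, sub_self]
    exact .zero

end BilinearSystem

theorem HasDerivAt.fromRows_mul {ι₁ ι₂ ρ : Type*} [Fintype ι₁] [Fintype ι₂] [Fintype ρ]
    {Y₁ : ℝ → Matrix ι₁ ρ ℝ} {Y₂ : ℝ → Matrix ι₂ ρ ℝ} {B₁ : Matrix ι₁ ι₁ ℝ}
    {B₂ : Matrix ι₂ ι₂ ℝ} {t : ℝ} (h₁ : HasDerivAt Y₁ (B₁ * Y₁ t) t)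
    (h₂ : HasDerivAt Y₂ (B₂ * Y₂ t) t) :
    HasDerivAt (fun s => fromRows (Y₁ s) (Y₂ s))
      (fromBlocks B₁ 0 0 B₂ * fromRows (Y₁ t) (Y₂ t)) t :=
  (h₁.matrix_fromRows h₂).congr_deriv (by simp [fromBlocks_mul_fromRows])

theorem Matrix.fromBlocks_add_sum_smul {ι₁ ι₂ κ : Type*} [Fintype κ] (A₁ : Matrix ι₁ ι₁ ℝ)
    (A₂ : Matrix ι₂ ι₂ ℝ) (N₁ : κ → Matrix ι₁ ι₁ ℝ) (N₂ : κ → Matrix ι₂ ι₂ ℝ) (c : κ → ℝ) :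
    fromBlocks (A₁ + ∑ k, c k • N₁ k) 0 0 (A₂ + ∑ k, c k • N₂ k) =
      fromBlocks A₁ 0 0 A₂ + ∑ k, c k • fromBlocks (N₁ k) 0 0 (N₂ k) := by
  ext (i | i) (j | j) <;> simp [Matrix.sum_apply]

theorem Matrix.sum_sq_le_trace_mul_of_posSemidef {ι ρ m : Type*} [Fintype ι] [Fintype ρ]
    [Fintype m] {W : Matrix m ι ℝ} {Y : Matrix ι ρ ℝ} {Z : Matrix ι ι ℝ} {c : ℝ}
    (h : (c • ((2 : ℝ)⁻¹ • (Z + Zᵀ)) - Y * Yᵀ).PosSemidef) :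
    ∑ i, ∑ j, (W * Y) i j ^ 2 ≤ (W * Z * Wᵀ).trace * c := by
  have hW := (h.mul_mul_conjTranspose_same W).trace_nonneg
  have hsym : (W * Zᵀ * Wᵀ).trace = (W * Z * Wᵀ).trace := by
    rw [← trace_transpose (W * Z * Wᵀ)]
    simp only [transpose_mul, transpose_transpose, Matrix.mul_assoc]
  have hfrob : (W * (Y * Yᵀ) * Wᵀ).trace = ∑ i, ∑ j, (W * Y) i j ^ 2 := by
    rw [← Matrix.mul_assoc, Matrix.mul_assoc, ← transpose_mul]
    simp [trace, mul_apply, sq, mul_comm]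
  simp only [conjTranspose_eq_transpose_of_trivial, Matrix.mul_sub, Matrix.sub_mul,
    Matrix.mul_smul, Matrix.smul_mul, Matrix.mul_add, Matrix.add_mul, trace_sub, trace_smul,
    trace_add, hsym, hfrob, smul_eq_mul] at hW
  linarith

/-- from the proof of Theorem 2.4: Frobenius-norm estimate
`‖Φ(t) X₀ − V Φ̃(t) X̃₀‖_F² ≤ tr([I −V] Z^e_γ(t) [I −V]ᵀ) · exp{∫₀ᵗ ‖γ u⁰(s)‖₂² ds}`. -/
theorem fundamental_solution_projection_estimate
    {n nr q m : ℕ} (γ : ℝ) (hγ : 0 < γ)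
    (A : Matrix (Fin n) (Fin n) ℝ) (N : Fin m → Matrix (Fin n) (Fin n) ℝ)
    (X₀ : Matrix (Fin n) (Fin q) ℝ)
    (At : Matrix (Fin nr) (Fin nr) ℝ) (Nt : Fin m → Matrix (Fin nr) (Fin nr) ℝ)
    (Xt₀ : Matrix (Fin nr) (Fin q) ℝ)
    (V : Matrix (Fin n) (Fin nr) ℝ)
    (u : ℝ → Fin m → ℝ) (hu : Continuous u)
    -- `Φ` is the fundamental solution of the system `(A, Nₖ)`
    (Φ : ℝ → ℝ → Matrix (Fin n) (Fin n) ℝ)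
    (hΦinit : ∀ s, 0 ≤ s → Φ s s = 1)
    (hΦode : ∀ s, 0 ≤ s → ∀ t, s ≤ t →
      HasDerivAt (fun τ => Φ τ s) (A * Φ t s + ∑ k, u t k • (N k * Φ t s)) t)
    -- `Φt` is the fundamental solution of the system `(Ã, Ñₖ)`
    (Φt : ℝ → ℝ → Matrix (Fin nr) (Fin nr) ℝ)
    (hΦtinit : ∀ s, 0 ≤ s → Φt s s = 1)
    (hΦtode : ∀ s, 0 ≤ s → ∀ t, s ≤ t →
      HasDerivAt (fun τ => Φt τ s) (At * Φt t s + ∑ k, u t k • (Nt k * Φt t s)) t)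
    -- `Ze` solves the augmented generalized Lyapunov matrix ODE
    (Ze : ℝ → Matrix (Fin n ⊕ Fin nr) (Fin n ⊕ Fin nr) ℝ)
    (hZe0 : Ze 0 = Matrix.fromRows X₀ Xt₀ * (Matrix.fromRows X₀ Xt₀)ᵀ)
    (hZeode : ∀ t, 0 ≤ t → HasDerivAt Ze
      (Matrix.fromBlocks A 0 0 At * Ze t + Ze t * (Matrix.fromBlocks A 0 0 At)ᵀ
        + (γ ^ 2)⁻¹ • ∑ k,
            Matrix.fromBlocks (N k) 0 0 (Nt k) * Ze t
              * (Matrix.fromBlocks (N k) 0 0 (Nt k))ᵀ) t)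
    (t : ℝ) (ht : 0 ≤ t) :
    ∑ i, ∑ j, ((Φ t 0 * X₀ - V * (Φt t 0 * Xt₀)) i j) ^ 2
      ≤ (Matrix.fromCols (1 : Matrix (Fin n) (Fin n) ℝ) (-V) * Ze t
          * (Matrix.fromCols (1 : Matrix (Fin n) (Fin n) ℝ) (-V))ᵀ).trace
        * Real.exp (∫ v in (0 : ℝ)..t,
            ∑ k, (γ * (if Matrix.fromBlocks (N k) 0 0 (Nt k) = 0 then (0 : ℝ) else u v k)) ^ 2) := by
  set Y : ℝ → Matrix (Fin n ⊕ Fin nr) (Fin q) ℝ :=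
    fun s => fromRows (Φ s 0 * X₀) (Φt s 0 * Xt₀)
  have hY0 : Y 0 = fromRows X₀ Xt₀ := by simp [Y, hΦinit 0 le_rfl, hΦtinit 0 le_rfl]
  have hY : ∀ s, 0 ≤ s → HasDerivAt Y ((fromBlocks A 0 0 At +
      ∑ k, u s k • fromBlocks (N k) 0 0 (Nt k)) * Y s) s := fun s hs => by
    rw [← fromBlocks_add_sum_smul]
    exact ((hΦode 0 le_rfl s hs).bilinear_mul_const X₀).fromRows_mul
      ((hΦtode 0 le_rfl s hs).bilinear_mul_const Xt₀)
  have hWY : fromCols (1 : Matrix (Fin n) (Fin n) ℝ) (-V) * Y t =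
      Φ t 0 * X₀ - V * (Φt t 0 * Xt₀) := by
    rw [fromCols_mul_fromRows, Matrix.one_mul, Matrix.neg_mul, ← sub_eq_add_neg]
  rw [← hWY]
  exact sum_sq_le_trace_mul_of_posSemidef
    (posSemidef_exp_smul_sub_mul_transpose hγ.ne' hu hY (hY0 ▸ hZe0) hZeode ht)
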